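/- arXiv:0802.2159 — 4 statements merged into one kernel-verified Lean document; each statement's English description precedes it below -/
import Mathlib

section
/- Let N be a finite nonempty player set, let P̃ > 0 be a real power constraint, let cost : Finset N → ℝ be a cost function, and let C : Finset N → ℝ satisfy C(S) > 0 for every nonempty S. Define the coalitional value v(S) = |S| · C(S) if cost(S) < P̃, and v(S) = 0 otherwise. If there exist two disjoint nonempty coalitions S₁, S₂ ⊆ N with cost(S₁) < P̃, cost(S₂) < P̃, and cost(S₁ ∪ S₂) ≥ P̃, then v(S₁ ∪ S₂) < v(S₁) + v(S₂); in particular, the game v is not superadditive. -/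
section TransmitterGame

variable {N : Type*} {Pt : ℝ} {cost C v : Finset N → ℝ}

theorem transmitter_value_pos
    (hC : ∀ S : Finset N, S.Nonempty → 0 < C S)
    (hv : ∀ S : Finset N, v S = if cost S < Pt then (S.card : ℝ) * C S else 0)
    {S : Finset N} (hS : S.Nonempty) (hcost : cost S < Pt) : 0 < v S := by
  rw [hv, if_pos hcost]
  exact mul_pos (Nat.cast_pos.2 hS.card_pos) (hC S hS)

theorem transmitter_value_eq_zero
    (hv : ∀ S : Finset N, v S = if cost S < Pt then (S.card : ℝ) * C S else 0)
    {S : Finset N} (hcost : Pt ≤ cost S) : v S = 0 := by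
  rw [hv, if_neg hcost.not_gt]

end TransmitterGame

theorem transmitter_game_not_superadditive_general
    {N : Type*} [DecidableEq N]
    (Pt : ℝ)
    (cost C : Finset N → ℝ)
    (hC : ∀ S : Finset N, S.Nonempty → 0 < C S)
    (v : Finset N → ℝ)
    (hv : ∀ S : Finset N, v S = if cost S < Pt then (S.card : ℝ) * C S else 0)
    (S₁ S₂ : Finset N) (hS₁ : S₁.Nonempty) (hS₂ : S₂.Nonempty)
    (hdisj : Disjoint S₁ S₂)
    (hc₁ : cost S₁ < Pt) (hc₂ : cost S₂ < Pt)
    (hc₁₂ : Pt ≤ cost (S₁ ∪ S₂)) :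
    v (S₁ ∪ S₂) < v S₁ + v S₂ ∧
      ¬ (∀ A B : Finset N, Disjoint A B → v A + v B ≤ v (A ∪ B)) := by
  have hlt : v (S₁ ∪ S₂) < v S₁ + v S₂ := by
    rw [transmitter_value_eq_zero hv hc₁₂]
    exact add_pos (transmitter_value_pos hC hv hS₁ hc₁) (transmitter_value_pos hC hv hS₂ hc₂)
  exact ⟨hlt, fun hsuper => (hsuper S₁ S₂ hdisj).not_gt hlt⟩

/-- **Non-superadditivity of the transmitter cooperation game with cost.**
Let `N` be a finite nonempty player set, `Pt > 0` a power constraint, `cost` a cost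
function on coalitions, and `C S > 0` for every nonempty coalition `S`. The value is
`v S = |S| * C S` if `cost S < Pt`, and `v S = 0` otherwise. If there are two disjoint
nonempty coalitions `S₁, S₂` with `cost S₁ < Pt`, `cost S₂ < Pt` and `cost (S₁ ∪ S₂) ≥ Pt`,
then `v (S₁ ∪ S₂) < v S₁ + v S₂`; in particular `v` is not superadditive. -/
theorem transmitter_game_not_superadditive
    {N : Type*} [Fintype N] [DecidableEq N] [Nonempty N]
    (Pt : ℝ) (hPt : 0 < Pt)
    (cost C : Finset N → ℝ)
    (hC : ∀ S : Finset N, S.Nonempty → 0 < C S)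
    (v : Finset N → ℝ)
    (hv : ∀ S : Finset N, v S = if cost S < Pt then (S.card : ℝ) * C S else 0)
    (S₁ S₂ : Finset N) (hS₁ : S₁.Nonempty) (hS₂ : S₂.Nonempty)
    (hdisj : Disjoint S₁ S₂)
    (hc₁ : cost S₁ < Pt) (hc₂ : cost S₂ < Pt)
    (hc₁₂ : Pt ≤ cost (S₁ ∪ S₂)) :
    v (S₁ ∪ S₂) < v S₁ + v S₂ ∧
      ¬ (∀ A B : Finset N, Disjoint A B → v A + v B ≤ v (A ∪ B)) :=
  transmitter_game_not_superadditive_general Pt cost C hC v hv S₁ S₂ hS₁ hS₂ hdisj hc₁ hc₂ hc₁₂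
end

section
/- Let v : Finset N → ℝ be a TU coalitional game on a finite nonempty player set N. There is no infinite sequence P₀, P₁, P₂, … of partitions of N in which each P_{t+1} is obtained from P_t by an applicable merge rule or an applicable split rule; that is, every iteration of successive arbitrary merge and split operations terminates. -/
variable {N : Type*} [Fintype N] [DecidableEq N]

/-- `P` is a partition of the player set `N`: a finite collection of pairwise disjoint
nonempty coalitions whose union is `N`. -/
def IsPartition (P : Finset (Finset N)) : Prop :=
  (∀ S ∈ P, S.Nonempty) ∧
  (P : Set (Finset N)).PairwiseDisjoint id ∧
  P.sup id = Finset.univ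

/-- The merge rule: replace coalitions `S₁, …, S_k ∈ P` (`k ≥ 2`) by their union,
applicable when `∑ⱼ v(Sⱼ) < v(⋃ⱼ Sⱼ)`. -/
def MergeStep (v : Finset N → ℝ) (P P' : Finset (Finset N)) : Prop :=
  ∃ F : Finset (Finset N), F ⊆ P ∧ 2 ≤ F.card ∧
    (∑ S ∈ F, v S) < v (F.sup id) ∧
    P' = (P \ F) ∪ {F.sup id}

/-- The split rule: replace a coalition `⋃ⱼ Sⱼ ∈ P` by pairwise disjoint nonempty
coalitions `S₁, …, S_k` (`k ≥ 2`), applicable when `∑ⱼ v(Sⱼ) > v(⋃ⱼ Sⱼ)`. -/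
def SplitStep (v : Finset N → ℝ) (P P' : Finset (Finset N)) : Prop :=
  ∃ U ∈ P, ∃ F : Finset (Finset N), 2 ≤ F.card ∧
    (∀ S ∈ F, S.Nonempty) ∧
    (F : Set (Finset N)).PairwiseDisjoint id ∧
    F.sup id = U ∧
    v U < ∑ S ∈ F, v S ∧
    P' = (P \ {U}) ∪ F

/-!
Each applicable merge or split strictly increases the total value `∑ S ∈ P, v S` of the
partition: because coalitions of a partition are disjoint and nonempty, the coalitions that are
removed are different from those that are added, so the total changes exactly by the gain that
makes the rule applicable. Hence the partitions along a run are pairwise distinct, which is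
impossible for infinitely many partitions of a finite set.
-/

open Finset

section

variable {α : Type*} [DecidableEq α]

theorem MergeStep.sum_lt {v : Finset α → ℝ} {P P' : Finset (Finset α)}
    (hne : ∀ S ∈ P, S.Nonempty) (hdisj : (P : Set (Finset α)).PairwiseDisjoint id)
    (h : MergeStep v P P') : ∑ S ∈ P, v S < ∑ S ∈ P', v S := by
  obtain ⟨F, hFP, hcard, hlt, rfl⟩ := h
  have hunion : F.sup id ∉ P \ F := by
    intro hmem
    rw [mem_sdiff] at hmem
    obtain ⟨S, hS⟩ : F.Nonempty := card_pos.mp (by omega)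
    have hS_eq : S = F.sup id :=
      hdisj.eq_of_le (hFP hS) hmem.1 (hne S (hFP hS)).ne_empty (le_sup (f := id) hS)
    exact hmem.2 (hS_eq ▸ hS)
  rw [sum_union (disjoint_singleton_right.mpr hunion), sum_singleton, ← sum_sdiff hFP]
  linarith

theorem SplitStep.sum_lt {v : Finset α → ℝ} {P P' : Finset (Finset α)}
    (hdisj : (P : Set (Finset α)).PairwiseDisjoint id)
    (h : SplitStep v P P') : ∑ S ∈ P, v S < ∑ S ∈ P', v S := by
  obtain ⟨U, hU, F, -, hne, -, rfl, hlt, rfl⟩ := h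
  have hparts : Disjoint (P \ {F.sup id}) F := by
    refine disjoint_right.mpr fun S hS hmem => ?_
    rw [mem_sdiff, mem_singleton] at hmem
    exact hmem.2 (hdisj.eq_of_le hmem.1 hU (hne S hS).ne_empty (le_sup (f := id) hS))
  have hrest := sum_sdiff (f := v) (singleton_subset_iff.mpr hU)
  rw [sum_singleton] at hrest
  rw [sum_union hparts]
  linarith

end

theorem merge_split_terminates_general
    (v : Finset N → ℝ) :
    ¬ ∃ P : ℕ → Finset (Finset N),
        (∀ t, IsPartition (P t)) ∧
        (∀ t, MergeStep v (P t) (P (t + 1)) ∨ SplitStep v (P t) (P (t + 1))) := by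
  rintro ⟨P, hpart, hstep⟩
  have hmono : StrictMono fun t => ∑ S ∈ P t, v S := by
    refine strictMono_nat_of_lt_succ fun t => ?_
    obtain ⟨hne, hdisj, -⟩ := hpart t
    exact (hstep t).elim (·.sum_lt hne hdisj) (·.sum_lt hdisj)
  exact not_injective_infinite_finite P
    (Function.Injective.of_comp (f := fun Q => ∑ S ∈ Q, v S) hmono.injective)

/-- **Termination of merge-and-split iterations.** For a TU coalitional game `v` on a
finite nonempty player set `N`, there is no infinite sequence of partitions of `N` in
which each partition is obtained from the previous one by an applicable merge rule or an
applicable split rule. -/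
theorem merge_split_terminates [Nonempty N]
    (v : Finset N → ℝ) (hv0 : v ∅ = 0) :
    ¬ ∃ P : ℕ → Finset (Finset N),
        (∀ t, IsPartition (P t)) ∧
        (∀ t, MergeStep v (P t) (P (t + 1)) ∨ SplitStep v (P t) (P (t + 1))) :=
  merge_split_terminates_general v
end

section
/- Let v : Finset N → ℝ be a TU coalitional game on a finite nonempty player set N, and let T = {T₁, …, T_l} be a partition of N satisfying: (i) for each i and each pair of disjoint nonempty coalitions S₁, S₂ with S₁ ∪ S₂ ⊆ T_i, v(S₁ ∪ S₂) > v(S₁) + v(S₂); and (ii) for every T-incompatible coalition G, ∑_{i=1}^l v(T_i ∩ G) > v(G). Then no merge rule and no split rule is applicable to T; in particular T is stable under merge-and-split operations. -/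
/-!
A merge of members `S₁, …, S_k` of `T` produces a `T`-incompatible coalition `G` with
`Tᵢ ∩ G = Sⱼ` or `∅`, so condition (ii) says `∑ v(Sⱼ) > v(G)`, the reverse of the merge
inequality. A split of `U ∈ T` is blocked by condition (i): peeling off one part at a time,
strict superadditivity inside `U` gives `∑ v(Sⱼ) < v(U)` as soon as there are two parts.
-/

variable {N : Type*} [Fintype N] [DecidableEq N]

/-- A coalition `G` is `T`-incompatible for a partition `T` if `G` is contained in no
member of `T`. -/
def Incompatible (T : Finset (Finset N)) (G : Finset N) : Prop :=
  ∀ Ti ∈ T, ¬ G ⊆ Ti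

def StrictlySuperadditiveOn {α : Type*} [DecidableEq α] (v : Finset α → ℝ) (U : Finset α) :
    Prop :=
  ∀ S₁ S₂ : Finset α, S₁.Nonempty → S₂.Nonempty → Disjoint S₁ S₂ → S₁ ∪ S₂ ⊆ U →
    v S₁ + v S₂ < v (S₁ ∪ S₂)

namespace StrictlySuperadditiveOn

variable {α : Type*} [DecidableEq α] {v : Finset α → ℝ} {U : Finset α}

theorem sum_insert_lt (hv : StrictlySuperadditiveOn v U) {a : Finset α}
    {F : Finset (Finset α)} (haF : a ∉ F) (hF : F.Nonempty) (hne : ∀ S ∈ insert a F, S.Nonempty)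
    (hdisj : (↑(insert a F) : Set (Finset α)).PairwiseDisjoint id)
    (hsub : (insert a F).sup id ⊆ U) (ih : ∑ S ∈ F, v S ≤ v (F.sup id)) :
    ∑ S ∈ insert a F, v S < v ((insert a F).sup id) := by
  rw [Finset.coe_insert, Set.pairwiseDisjoint_insert] at hdisj
  have hdisj_a : Disjoint a (F.sup id) := Finset.disjoint_sup_right.2 fun S hS =>
    hdisj.2 S hS fun h => haF (h ▸ hS)
  obtain ⟨b, hb⟩ := hF
  have hsup_ne : (F.sup id).Nonempty :=
    (hne b (Finset.mem_insert_of_mem hb)).mono (Finset.le_sup (f := id) hb)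
  rw [Finset.sup_insert] at hsub ⊢
  have := hv a (F.sup id) (hne a (Finset.mem_insert_self a F)) hsup_ne hdisj_a hsub
  rw [Finset.sum_insert haF]
  exact (add_le_add_right ih _).trans_lt this

theorem sum_le (hv : StrictlySuperadditiveOn v U) {F : Finset (Finset α)} (hF : F.Nonempty)
    (hne : ∀ S ∈ F, S.Nonempty) (hdisj : (F : Set (Finset α)).PairwiseDisjoint id)
    (hsub : F.sup id ⊆ U) : ∑ S ∈ F, v S ≤ v (F.sup id) := by
  induction hF using Finset.Nonempty.cons_induction with
  | singleton a => simp
  | cons a F haF hF ih =>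
    rw [Finset.cons_eq_insert] at hne hdisj hsub ⊢
    refine (hv.sum_insert_lt haF hF hne hdisj hsub (ih ?_ ?_ ?_)).le
    · exact fun S hS => hne S (Finset.mem_insert_of_mem hS)
    · exact hdisj.subset (by simp)
    · exact (Finset.sup_mono (Finset.subset_insert a F)).trans hsub

theorem sum_lt (hv : StrictlySuperadditiveOn v U) {F : Finset (Finset α)} (hF : 2 ≤ F.card)
    (hne : ∀ S ∈ F, S.Nonempty) (hdisj : (F : Set (Finset α)).PairwiseDisjoint id)
    (hsub : F.sup id ⊆ U) : ∑ S ∈ F, v S < v (F.sup id) := by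
  obtain ⟨a, ha⟩ : F.Nonempty := Finset.card_pos.1 (by omega)
  have hrest : (F.erase a).Nonempty :=
    Finset.card_pos.1 (by rw [Finset.card_erase_of_mem ha]; omega)
  rw [← Finset.insert_erase ha] at hne hdisj hsub ⊢
  refine hv.sum_insert_lt (Finset.notMem_erase a F) hrest hne hdisj hsub
    (hv.sum_le hrest ?_ ?_ ?_)
  · exact fun S hS => hne S (Finset.mem_insert_of_mem hS)
  · exact hdisj.subset (by simp)
  · exact (Finset.sup_mono (Finset.subset_insert a _)).trans hsub

end StrictlySuperadditiveOn

section Partition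

variable {α : Type*} [DecidableEq α] {T F : Finset (Finset α)}

theorem incompatible_sup_of_subset (hne : ∀ S ∈ T, S.Nonempty)
    (hdisj : (T : Set (Finset α)).PairwiseDisjoint id) (hFT : F ⊆ T) (hF : 2 ≤ F.card) :
    Incompatible T (F.sup id) := by
  intro Tj hTj hsub
  suffices ∀ S ∈ F, S = Tj by
    have := Finset.card_le_one.2 fun S hS S' hS' => (this S hS).trans (this S' hS').symm
    omega
  intro S hS
  by_contra hST
  exact (hne S (hFT hS)).ne_empty <|
    (hdisj (hFT hS) hTj hST).eq_bot_of_le ((Finset.le_sup (f := id) hS).trans hsub)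

theorem sum_inter_sup_of_subset {v : Finset α → ℝ} (hv0 : v ∅ = 0)
    (hdisj : (T : Set (Finset α)).PairwiseDisjoint id) (hFT : F ⊆ T) :
    ∑ Ti ∈ T, v (Ti ∩ F.sup id) = ∑ S ∈ F, v S := by
  refine (Finset.sum_subset hFT fun Ti hTi hTiF => ?_).symm.trans
    (Finset.sum_congr rfl fun S hS => ?_)
  · have : Disjoint Ti (F.sup id) := Finset.disjoint_sup_right.2 fun S hS =>
      hdisj hTi (hFT hS) fun h => hTiF (h ▸ hS)
    rw [Finset.disjoint_iff_inter_eq_empty.1 this, hv0]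
  · exact congrArg v (Finset.inter_eq_left.2 (Finset.le_sup (f := id) hS))

end Partition

theorem dc_stable_no_merge_split_general
    (v : Finset N → ℝ) (hv0 : v ∅ = 0)
    (T : Finset (Finset N)) (hT : IsPartition T)
    (hcond1 : ∀ Ti ∈ T, ∀ S₁ S₂ : Finset N, S₁.Nonempty → S₂.Nonempty →
      Disjoint S₁ S₂ → S₁ ∪ S₂ ⊆ Ti → v S₁ + v S₂ < v (S₁ ∪ S₂))
    (hcond2 : ∀ G : Finset N, Incompatible T G → v G < ∑ Ti ∈ T, v (Ti ∩ G)) :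
    ∀ Q : Finset (Finset N), ¬ MergeStep v T Q ∧ ¬ SplitStep v T Q := by
  obtain ⟨hTne, hTdisj, -⟩ := hT
  refine fun Q => ⟨?_, ?_⟩
  · rintro ⟨F, hFT, hF, hmerge, -⟩
    have hblock := hcond2 _ (incompatible_sup_of_subset hTne hTdisj hFT hF)
    rw [sum_inter_sup_of_subset hv0 hTdisj hFT] at hblock
    exact lt_asymm hmerge hblock
  · rintro ⟨U, hUT, F, hF, hne, hdisj, rfl, hsplit, -⟩
    exact lt_asymm hsplit (StrictlySuperadditiveOn.sum_lt (hcond1 _ hUT) hF hne hdisj le_rfl)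

/-- **Strict `D_c`-stability implies no applicable merge or split.** Let `v` be a TU
coalitional game on a finite nonempty player set `N` and let `T` be a partition of `N`
satisfying: (i) for each member `Ti` of `T` and each pair of disjoint nonempty coalitions
`S₁, S₂` with `S₁ ∪ S₂ ⊆ Ti`, `v (S₁ ∪ S₂) > v S₁ + v S₂`; and (ii) for every
`T`-incompatible coalition `G`, `∑_{Ti ∈ T} v (Ti ∩ G) > v G`. Then no merge rule and no
split rule is applicable to `T`. -/
theorem dc_stable_no_merge_split [Nonempty N]
    (v : Finset N → ℝ) (hv0 : v ∅ = 0)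
    (T : Finset (Finset N)) (hT : IsPartition T)
    (hcond1 : ∀ Ti ∈ T, ∀ S₁ S₂ : Finset N, S₁.Nonempty → S₂.Nonempty →
      Disjoint S₁ S₂ → S₁ ∪ S₂ ⊆ Ti → v S₁ + v S₂ < v (S₁ ∪ S₂))
    (hcond2 : ∀ G : Finset N, Incompatible T G → v G < ∑ Ti ∈ T, v (Ti ∩ G)) :
    ∀ Q : Finset (Finset N), ¬ MergeStep v T Q ∧ ¬ SplitStep v T Q :=
  dc_stable_no_merge_split_general v hv0 T hT hcond1 hcond2
end

section
/- Let v : Finset N → ℝ be a TU coalitional game on a finite nonempty player set N, and let T = {T₁, …, T_l} be a partition of N satisfying: (i) for each i and each pair of disjoint nonempty coalitions S₁, S₂ with S₁ ∪ S₂ ⊆ T_i, v(S₁ ∪ S₂) > v(S₁) + v(S₂); and (ii) for every T-incompatible coalition G, ∑_{i=1}^l v(T_i ∩ G) > v(G). Then T is the unique partition of N to which no merge rule and no split rule is applicable: if P is any partition of N admitting no applicable merge and no applicable split, then P = T. -/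
variable {N : Type*} [Fintype N] [DecidableEq N]

/-!
A terminal partition `P` refines `T`: a member of `P` meeting several members of `T` could be
split into its traces on `T`, which is profitable by (ii). Each `Ti ∈ T` is then the union of the
members of `P` inside it; condition (i), extended from pairs to families by induction, makes
merging these profitable unless there is only one of them, so `Ti ∈ P`. Finally, two partitions
with `T ⊆ P` coincide.
-/

open Finset

section Superadditive

variable {α : Type*} [DecidableEq α]

def StrictSuperadditiveOn (v : Finset α → ℝ) (U : Finset α) : Prop :=
  ∀ S₁ S₂ : Finset α, S₁.Nonempty → S₂.Nonempty → Disjoint S₁ S₂ → S₁ ∪ S₂ ⊆ U →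
    v S₁ + v S₂ < v (S₁ ∪ S₂)

namespace StrictSuperadditiveOn

variable {v : Finset α → ℝ} {U : Finset α}

theorem sum_cons_lt (hv : StrictSuperadditiveOn v U) {a : Finset α} {F : Finset (Finset α)}
    (ha : a ∉ F) (hF : F.Nonempty) (hne : ∀ S ∈ F.cons a ha, S.Nonempty)
    (hdisj : ((F.cons a ha : Finset (Finset α)) : Set (Finset α)).PairwiseDisjoint id)
    (hsub : (F.cons a ha).sup id ⊆ U) (hF_le : ∑ S ∈ F, v S ≤ v (F.sup id)) :
    ∑ S ∈ F.cons a ha, v S < v ((F.cons a ha).sup id) := by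
  have ha_disj : Disjoint a (F.sup id) := Finset.disjoint_sup_right.2 fun S hS =>
    hdisj (by simp) (by simp [hS]) (ne_of_mem_of_not_mem hS ha).symm
  obtain ⟨S, hS⟩ := hF
  have hsup_ne : (F.sup id).Nonempty := (hne S (mem_cons_of_mem hS)).mono (le_sup (f := id) hS)
  simp only [sum_cons, sup_cons, id, Finset.sup_eq_union] at hsub ⊢
  linarith [hv a _ (hne a (mem_cons_self a F)) hsup_ne ha_disj hsub]

theorem sum_le (hv : StrictSuperadditiveOn v U) {F : Finset (Finset α)} (hF : F.Nonempty)
    (hne : ∀ S ∈ F, S.Nonempty) (hdisj : (F : Set (Finset α)).PairwiseDisjoint id)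
    (hsub : F.sup id ⊆ U) : ∑ S ∈ F, v S ≤ v (F.sup id) := by
  induction hF using Nonempty.cons_induction with
  | singleton a => simp
  | cons a F ha hF ih =>
    have hdisj' : (F : Set (Finset α)).PairwiseDisjoint id :=
      hdisj.subset (by simp [Set.subset_insert])
    exact (hv.sum_cons_lt ha hF hne hdisj hsub (ih (fun S hS => hne S (mem_cons_of_mem hS))
      hdisj' ((sup_mono (subset_cons ha)).trans hsub))).le

theorem sum_lt (hv : StrictSuperadditiveOn v U) {F : Finset (Finset α)} (hF : 2 ≤ #F)
    (hne : ∀ S ∈ F, S.Nonempty) (hdisj : (F : Set (Finset α)).PairwiseDisjoint id)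
    (hsub : F.sup id ⊆ U) : ∑ S ∈ F, v S < v (F.sup id) := by
  obtain ⟨a, ha⟩ := card_pos.1 (by omega : 0 < #F)
  have hF' : (F.erase a).Nonempty := by rw [← card_pos, card_erase_of_mem ha]; omega
  have hF'_le := hv.sum_le hF' (fun S hS => hne S (mem_of_mem_erase hS))
    (hdisj.subset (by simp)) ((sup_mono (erase_subset a F)).trans hsub)
  have hcons : (F.erase a).cons a (notMem_erase a F) = F := by
    rw [cons_eq_insert, insert_erase ha]
  rw [← hcons] at hne hdisj hsub ⊢
  exact hv.sum_cons_lt _ hF' hne hdisj hsub hF'_le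

end StrictSuperadditiveOn

end Superadditive

theorem Finset.eq_singleton_of_card_le_one_of_sup_eq {β : Type*} [SemilatticeSup β] [OrderBot β]
    {F : Finset β} {U : β} (hF : #F ≤ 1) (hsup : F.sup id = U) (hU : U ≠ ⊥) : F = {U} := by
  obtain ⟨x, hx⟩ := card_le_one_iff_subset_singleton.1 hF
  rcases subset_singleton_iff.1 hx with rfl | rfl
  · exact absurd hsup.symm hU
  · rw [← hsup, sup_singleton, id]

namespace IsPartition

variable {v : Finset N → ℝ} {P T : Finset (Finset N)}

def toFinpartition (hP : IsPartition P) : Finpartition (univ : Finset N) where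
  parts := P
  supIndep := supIndep_iff_pairwiseDisjoint.2 hP.2.1
  sup_parts := hP.2.2
  bot_notMem h := not_nonempty_empty (hP.1 ∅ h)

theorem sum_parts_le_of_forall_not_splitStep (hP : IsPartition P)
    (hsplit : ∀ Q, ¬ SplitStep v P Q) {U : Finset N} (hU : U ∈ P) (Q : Finpartition U) :
    ∑ S ∈ Q.parts, v S ≤ v U := by
  by_contra! hlt
  rcases le_or_gt #Q.parts 1 with h1 | h2
  · rw [eq_singleton_of_card_le_one_of_sup_eq h1 Q.sup_parts (hP.1 U hU).ne_empty,
      sum_singleton] at hlt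
    exact hlt.false
  · exact hsplit _
      ⟨U, hU, Q.parts, h2, fun _ => Q.nonempty_of_mem_parts, Q.disjoint, Q.sup_parts, hlt, rfl⟩

theorem exists_superset_of_sum_parts_le (hT : IsPartition T) (hv0 : v ∅ = 0)
    (hcond2 : ∀ G : Finset N, Incompatible T G → v G < ∑ Ti ∈ T, v (Ti ∩ G)) {S : Finset N}
    (hS : ∀ Q : Finpartition S, ∑ S' ∈ Q.parts, v S' ≤ v S) : ∃ Ti ∈ T, S ⊆ Ti := by
  by_contra! hS_inc
  have h := hS (hT.toFinpartition.restrict (subset_univ S))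
  rw [Finpartition.sum_restrict _ _ v hv0] at h
  exact (hcond2 S hS_inc).not_ge h

theorem mem_of_forall_not_mergeStep (hP : IsPartition P) (hmerge : ∀ Q, ¬ MergeStep v P Q)
    {U : Finset N} (hv : StrictSuperadditiveOn v U) (hU : U.Nonempty)
    (hcover : (P.filter (· ⊆ U)).sup id = U) : U ∈ P := by
  rcases le_or_gt #(P.filter (· ⊆ U)) 1 with h1 | h2
  · have h := eq_singleton_of_card_le_one_of_sup_eq h1 hcover hU.ne_empty
    exact (mem_filter.1 (h ▸ mem_singleton_self U)).1
  · exfalso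
    refine hmerge _ ⟨_, filter_subset _ _, h2, ?_, rfl⟩
    exact hv.sum_lt h2 (fun S hS => hP.1 S (mem_filter.1 hS).1)
      (hP.2.1.subset (coe_subset.2 (filter_subset _ _))) hcover.le

theorem sup_filter_subset_eq (hP : IsPartition P) (hT : IsPartition T)
    (hrefines : ∀ S ∈ P, ∃ Ti ∈ T, S ⊆ Ti) {Ti : Finset N} (hTi : Ti ∈ T) :
    (P.filter (· ⊆ Ti)).sup id = Ti := by
  refine le_antisymm (Finset.sup_le fun S hS => (mem_filter.1 hS).2) fun x hx => ?_
  obtain ⟨S, hS, hxS⟩ := hP.toFinpartition.exists_mem (mem_univ x)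
  obtain ⟨Tj, hTj, hSTj⟩ := hrefines S hS
  obtain rfl : Tj = Ti := hT.toFinpartition.eq_of_mem_parts hTj hTi (hSTj hxS) hx
  exact mem_sup.2 ⟨S, mem_filter.2 ⟨hS, hSTj⟩, hxS⟩

theorem eq_of_subset (hT : IsPartition T) (hP : IsPartition P) (h : T ⊆ P) : T = P := by
  refine Subset.antisymm h fun S hS => ?_
  obtain ⟨x, hx⟩ := hP.1 S hS
  obtain ⟨Ti, hTi, hxTi⟩ := hT.toFinpartition.exists_mem (mem_univ x)
  rwa [hP.toFinpartition.eq_of_mem_parts hS (h hTi) hx hxTi]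

end IsPartition

theorem dc_stable_unique_terminal_general
    (v : Finset N → ℝ) (hv0 : v ∅ = 0)
    (T : Finset (Finset N)) (hT : IsPartition T)
    (hcond1 : ∀ Ti ∈ T, ∀ S₁ S₂ : Finset N, S₁.Nonempty → S₂.Nonempty →
      Disjoint S₁ S₂ → S₁ ∪ S₂ ⊆ Ti → v S₁ + v S₂ < v (S₁ ∪ S₂))
    (hcond2 : ∀ G : Finset N, Incompatible T G → v G < ∑ Ti ∈ T, v (Ti ∩ G)) :
    ∀ P : Finset (Finset N), IsPartition P →
      (∀ Q : Finset (Finset N), ¬ MergeStep v P Q ∧ ¬ SplitStep v P Q) →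
      P = T := by
  intro P hP hterminal
  have hrefines : ∀ S ∈ P, ∃ Ti ∈ T, S ⊆ Ti := fun S hS =>
    hT.exists_superset_of_sum_parts_le hv0 hcond2
      (hP.sum_parts_le_of_forall_not_splitStep (fun Q => (hterminal Q).2) hS)
  have hTP : T ⊆ P := fun Ti hTi =>
    hP.mem_of_forall_not_mergeStep (fun Q => (hterminal Q).1) (hcond1 Ti hTi) (hT.1 Ti hTi)
      (hP.sup_filter_subset_eq hT hrefines hTi)
  exact (hT.eq_of_subset hP hTP).symm

/-- **A strictly `D_c`-stable partition is the unique merge-and-split terminal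
partition.** Let `v` be a TU coalitional game on a finite nonempty player set `N` and
let `T` be a partition of `N` satisfying: (i) for each member `Ti` of `T` and each pair
of disjoint nonempty coalitions `S₁, S₂` with `S₁ ∪ S₂ ⊆ Ti`,
`v (S₁ ∪ S₂) > v S₁ + v S₂`; and (ii) for every `T`-incompatible coalition `G`,
`∑_{Ti ∈ T} v (Ti ∩ G) > v G`. Then `T` is the unique partition of `N` to which no merge
rule and no split rule is applicable: any partition `P` admitting no applicable merge and
no applicable split equals `T`. -/
theorem dc_stable_unique_terminal [Nonempty N]
    (v : Finset N → ℝ) (hv0 : v ∅ = 0)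
    (T : Finset (Finset N)) (hT : IsPartition T)
    (hcond1 : ∀ Ti ∈ T, ∀ S₁ S₂ : Finset N, S₁.Nonempty → S₂.Nonempty →
      Disjoint S₁ S₂ → S₁ ∪ S₂ ⊆ Ti → v S₁ + v S₂ < v (S₁ ∪ S₂))
    (hcond2 : ∀ G : Finset N, Incompatible T G → v G < ∑ Ti ∈ T, v (Ti ∩ G)) :
    ∀ P : Finset (Finset N), IsPartition P →
      (∀ Q : Finset (Finset N), ¬ MergeStep v P Q ∧ ¬ SplitStep v P Q) →
      P = T :=
  dc_stable_unique_terminal_general v hv0 T hT hcond1 hcond2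
end
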